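/- Coarse-grained classical bound: Let 0 ≤ ε₋ ≤ ε₊ < ∞ and define Θ̃(x) = 1 if x > ε₊, Θ̃(x) = 1/2 if −ε₋ ≤ x ≤ ε₊, Θ̃(x) = 0 if x < −ε₋. Let 0 = θ₀ ≤ θ₁ ≤ θ₂ < 2π satisfy θ₁ − θ₀ ≤ π, θ₂ − θ₁ ≤ π, and θ₂ − θ₀ ≥ π. Then the maximum over (r, φ) ∈ [0,∞) × ℝ of (1/3)·Σ_{k=0}^{2} Θ̃(r·cos(θ_k − φ)) equals 2/3. -/
import Mathlib


open Real

/-- Coarse-grained Heaviside function with thresholds ε₋, ε₊. -/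
noncomputable def coarseTheta (εm εp x : ℝ) : ℝ :=
  if εp < x then 1 else if x < -εm then 0 else 1/2

lemma ct_nonneg (εm εp x : ℝ) : 0 ≤ coarseTheta εm εp x := by
  unfold coarseTheta; split_ifs <;> norm_num

lemma ct_one (εm εp x : ℝ) (h : εp < x) : coarseTheta εm εp x = 1 := by
  unfold coarseTheta; rw [if_pos h]

lemma ct_cases (εm εp x : ℝ) :
    (coarseTheta εm εp x = 1 ∧ εp < x) ∨ coarseTheta εm εp x = 0 ∨
      (coarseTheta εm εp x = 1/2 ∧ -εm ≤ x) := by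
  unfold coarseTheta
  split_ifs with h1 h2
  · exact Or.inl ⟨rfl, h1⟩
  · exact Or.inr (Or.inl rfl)
  · exact Or.inr (Or.inr ⟨rfl, by linarith [not_lt.mp h2]⟩)

lemma two_cap (εm εp la lb lc xa xb xc : ℝ) (hεm : 0 ≤ εm) (hε : εm ≤ εp)
    (hla : 0 ≤ la) (hlb : 0 ≤ lb) (hlc : 0 ≤ lc) (htri : lc ≤ la + lb)
    (hpos : 0 < la + lb + lc)
    (hsum : la * xa + lb * xb + lc * xc = 0)
    (hxa : εp < xa) (hxb : εp < xb) (hxc : -εm ≤ xc) : False := by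
  have hab : 0 < la + lb := by
    rcases lt_or_ge 0 (la + lb) with h | h
    · exact h
    · linarith
  have h3 : lc * (-εm) ≤ lc * xc := mul_le_mul_of_nonneg_left hxc hlc
  rcases lt_or_ge 0 la with h | h
  · nlinarith [mul_lt_mul_of_pos_left hxa h, mul_le_mul_of_nonneg_left hxb.le hlb]
  · have hla0 : la = 0 := le_antisymm h hla
    have hlb0 : 0 < lb := by linarith
    nlinarith [mul_lt_mul_of_pos_left hxb hlb0]

lemma sum_le_two (εm εp l0 l1 l2 x0 x1 x2 : ℝ) (hεm : 0 ≤ εm) (hε : εm ≤ εp)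
    (hl0 : 0 ≤ l0) (hl1 : 0 ≤ l1) (hl2 : 0 ≤ l2)
    (ht0 : l0 ≤ l1 + l2) (ht1 : l1 ≤ l0 + l2) (ht2 : l2 ≤ l0 + l1)
    (hpos : 0 < l0 + l1 + l2)
    (hsum : l0 * x0 + l1 * x1 + l2 * x2 = 0) :
    coarseTheta εm εp x0 + coarseTheta εm εp x1 + coarseTheta εm εp x2 ≤ 2 := by
  rcases ct_cases εm εp x0 with ⟨e0, p0⟩ | e0 | ⟨e0, m0⟩ <;>
    rcases ct_cases εm εp x1 with ⟨e1, p1⟩ | e1 | ⟨e1, m1⟩ <;>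
      rcases ct_cases εm εp x2 with ⟨e2, p2⟩ | e2 | ⟨e2, m2⟩ <;>
        rw [e0, e1, e2] <;> try norm_num
  -- remaining bad cases
  all_goals exfalso
  all_goals first
    | exact two_cap εm εp l0 l1 l2 x0 x1 x2 hεm hε hl0 hl1 hl2 ht2 (by linarith)
        (by linarith) p0 p1 (by linarith)
    | exact two_cap εm εp l0 l2 l1 x0 x2 x1 hεm hε hl0 hl2 hl1 ht1 (by linarith)
        (by linarith) p0 p2 (by linarith)
    | exact two_cap εm εp l1 l2 l0 x1 x2 x0 hεm hε hl1 hl2 hl0 ht0 (by linarith)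
        (by linarith) p1 p2 (by linarith)

/-- Coarse-grained classical bound: for angles in the region where the ideal classical bound
is 2/3, the maximum coarse-grained classical score over all states (r, φ) is still 2/3. -/
theorem stmt17 (εm εp : ℝ) (hεm : 0 ≤ εm) (hε : εm ≤ εp)
    (θ₁ θ₂ : ℝ) (h01 : 0 ≤ θ₁) (h12 : θ₁ ≤ θ₂) (h2 : θ₂ < 2 * π)
    (c1 : θ₁ - 0 ≤ π) (c2 : θ₂ - θ₁ ≤ π) (c3 : π ≤ θ₂ - 0) :
    IsGreatest
      {s : ℝ | ∃ r φ : ℝ, 0 ≤ r ∧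
        s = (1/3) * (coarseTheta εm εp (r * Real.cos (0 - φ))
          + coarseTheta εm εp (r * Real.cos (θ₁ - φ))
          + coarseTheta εm εp (r * Real.cos (θ₂ - φ)))}
      (2/3) := by
  have hπ := Real.pi_pos
  have hub : ∀ s ∈ {s : ℝ | ∃ r φ : ℝ, 0 ≤ r ∧
        s = (1/3) * (coarseTheta εm εp (r * Real.cos (0 - φ))
          + coarseTheta εm εp (r * Real.cos (θ₁ - φ))
          + coarseTheta εm εp (r * Real.cos (θ₂ - φ)))}, s ≤ 2/3 := by
    rintro s ⟨r, φ, hr, rfl⟩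
    have key : coarseTheta εm εp (r * Real.cos (0 - φ))
        + coarseTheta εm εp (r * Real.cos (θ₁ - φ))
        + coarseTheta εm εp (r * Real.cos (θ₂ - φ)) ≤ 2 := by
      by_cases hd1 : θ₁ = 0 ∧ θ₂ = π
      · obtain ⟨h1, h2'⟩ := hd1
        subst h1; subst h2'
        refine sum_le_two εm εp 1 1 2 _ _ _ hεm hε (by norm_num) (by norm_num)
          (by norm_num) (by norm_num) (by norm_num) (by norm_num) (by norm_num) ?_
        rw [Real.cos_pi_sub, zero_sub, Real.cos_neg]; ring
      by_cases hd2 : θ₁ = π ∧ θ₂ = π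
      · obtain ⟨h1, h2'⟩ := hd2
        subst h1; subst h2'
        refine sum_le_two εm εp 2 1 1 _ _ _ hεm hε (by norm_num) (by norm_num)
          (by norm_num) (by norm_num) (by norm_num) (by norm_num) (by norm_num) ?_
        rw [Real.cos_pi_sub, zero_sub, Real.cos_neg]; ring
      -- nondegenerate case
      have hθ2π : π ≤ θ₂ := by linarith
      have hs1 : 0 ≤ Real.sin θ₁ := Real.sin_nonneg_of_nonneg_of_le_pi h01 (by linarith)
      have hs0 : 0 ≤ Real.sin (θ₂ - θ₁) :=
        Real.sin_nonneg_of_nonneg_of_le_pi (by linarith) (by linarith)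
      have hs2 : 0 ≤ -Real.sin θ₂ := by
        have h := Real.sin_nonneg_of_nonneg_of_le_pi (x := θ₂ - π) (by linarith) (by linarith)
        rw [Real.sin_sub_pi] at h
        linarith
      have hpos : 0 < Real.sin (θ₂ - θ₁) + -Real.sin θ₂ + Real.sin θ₁ := by
        rcases lt_or_eq_of_le h01 with h1p | h1z
        · rcases lt_or_eq_of_le (show θ₁ ≤ π by linarith) with h1pp | h1pi
          · have := Real.sin_pos_of_pos_of_lt_pi h1p h1pp
            linarith
          · -- θ₁ = π, so θ₂ ≠ π, hence θ₂ > π; and θ₂ - θ₁ ∈ (0, π)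
            have hne : θ₂ ≠ π := fun h => hd2 ⟨h1pi, h⟩
            have h2gt : π < θ₂ := lt_of_le_of_ne hθ2π (Ne.symm hne)
            have := Real.sin_pos_of_pos_of_lt_pi (x := θ₂ - θ₁) (by rw [h1pi]; linarith)
              (by rw [h1pi]; linarith)
            linarith
        · -- θ₁ = 0, so θ₂ ≠ π, hence θ₂ ∈ (π, 2π)
          have hne : θ₂ ≠ π := fun h => hd1 ⟨h1z.symm, h⟩
          have h2gt : π < θ₂ := lt_of_le_of_ne hθ2π (Ne.symm hne)
          have h := Real.sin_pos_of_pos_of_lt_pi (x := θ₂ - π) (by linarith) (by linarith)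
          rw [Real.sin_sub_pi] at h
          linarith
      have hexpA : Real.sin (θ₂ - θ₁) = Real.sin θ₂ * Real.cos θ₁ - Real.cos θ₂ * Real.sin θ₁ :=
        Real.sin_sub θ₂ θ₁
      have hexpB : Real.sin θ₂ = Real.sin θ₁ * Real.cos (θ₂ - θ₁)
          + Real.cos θ₁ * Real.sin (θ₂ - θ₁) := by
        have : θ₂ = θ₁ + (θ₂ - θ₁) := by ring
        nth_rewrite 1 [this]
        rw [Real.sin_add]
      have hexpC : Real.sin θ₁ = Real.sin θ₂ * Real.cos (θ₂ - θ₁)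
          - Real.cos θ₂ * Real.sin (θ₂ - θ₁) := by
        have : θ₁ = θ₂ - (θ₂ - θ₁) := by ring
        nth_rewrite 1 [this]
        rw [Real.sin_sub]
      have hc1a := Real.neg_one_le_cos θ₁
      have hc1b := Real.cos_le_one θ₁
      have hc2a := Real.neg_one_le_cos θ₂
      have hc2b := Real.cos_le_one θ₂
      have hc3a := Real.neg_one_le_cos (θ₂ - θ₁)
      have hc3b := Real.cos_le_one (θ₂ - θ₁)
      refine sum_le_two εm εp (Real.sin (θ₂ - θ₁)) (-Real.sin θ₂) (Real.sin θ₁) _ _ _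
        hεm hε hs0 hs2 hs1 ?_ ?_ ?_ hpos ?_
      · nlinarith [mul_nonneg hs2 (by linarith : (0:ℝ) ≤ 1 + Real.cos θ₁),
          mul_nonneg hs1 (by linarith : (0:ℝ) ≤ 1 + Real.cos θ₂)]
      · nlinarith [mul_nonneg hs1 (by linarith : (0:ℝ) ≤ 1 + Real.cos (θ₂ - θ₁)),
          mul_nonneg hs0 (by linarith : (0:ℝ) ≤ 1 + Real.cos θ₁)]
      · nlinarith [mul_nonneg hs2 (by linarith : (0:ℝ) ≤ 1 + Real.cos (θ₂ - θ₁)),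
          mul_nonneg hs0 (by linarith : (0:ℝ) ≤ 1 + Real.cos θ₂)]
      · simp only [Real.sin_sub, Real.cos_sub, Real.cos_zero, Real.sin_zero]; ring
    linarith
  constructor
  · -- membership
    rcases lt_or_eq_of_le c2 with hlt | heq
    · -- θ₂ - θ₁ < π : capture θ₁ and θ₂ with φ = (θ₁+θ₂)/2
      set φ := (θ₁ + θ₂) / 2 with hφ
      have hcδ : 0 < Real.cos ((θ₂ - θ₁) / 2) :=
        Real.cos_pos_of_mem_Ioo ⟨by linarith, by linarith⟩
      set r := (εp + 1) / Real.cos ((θ₂ - θ₁) / 2) with hrdef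
      have hr : 0 ≤ r := div_nonneg (by linarith) hcδ.le
      have hx1 : r * Real.cos (θ₁ - φ) = εp + 1 := by
        have h : θ₁ - φ = -((θ₂ - θ₁) / 2) := by rw [hφ]; ring
        rw [h, Real.cos_neg, hrdef, div_mul_cancel₀ _ (ne_of_gt hcδ)]
      have hx2 : r * Real.cos (θ₂ - φ) = εp + 1 := by
        have h : θ₂ - φ = (θ₂ - θ₁) / 2 := by rw [hφ]; ring
        rw [h, hrdef, div_mul_cancel₀ _ (ne_of_gt hcδ)]
      refine ⟨r, φ, hr, ?_⟩
      have hT1 : coarseTheta εm εp (r * Real.cos (θ₁ - φ)) = 1 := by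
        rw [hx1]; exact ct_one _ _ _ (by linarith)
      have hT2 : coarseTheta εm εp (r * Real.cos (θ₂ - φ)) = 1 := by
        rw [hx2]; exact ct_one _ _ _ (by linarith)
      have hv := hub _ ⟨r, φ, hr, rfl⟩
      have hnn := ct_nonneg εm εp (r * Real.cos (0 - φ))
      rw [hT1, hT2] at hv ⊢
      linarith
    · -- θ₂ - θ₁ = π : capture 0 and θ₁ with φ = θ₁/2
      have h1ltπ : θ₁ < π := by linarith
      set φ := θ₁ / 2 with hφ
      have hcδ : 0 < Real.cos (θ₁ / 2) :=
        Real.cos_pos_of_mem_Ioo ⟨by linarith, by linarith⟩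
      set r := (εp + 1) / Real.cos (θ₁ / 2) with hrdef
      have hr : 0 ≤ r := div_nonneg (by linarith) hcδ.le
      have hx0 : r * Real.cos (0 - φ) = εp + 1 := by
        have h : (0 : ℝ) - φ = -(θ₁ / 2) := by rw [hφ]; ring
        rw [h, Real.cos_neg, hrdef, div_mul_cancel₀ _ (ne_of_gt hcδ)]
      have hx1 : r * Real.cos (θ₁ - φ) = εp + 1 := by
        have h : θ₁ - φ = θ₁ / 2 := by rw [hφ]; ring
        rw [h, hrdef, div_mul_cancel₀ _ (ne_of_gt hcδ)]
      refine ⟨r, φ, hr, ?_⟩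
      have hT0 : coarseTheta εm εp (r * Real.cos (0 - φ)) = 1 := by
        rw [hx0]; exact ct_one _ _ _ (by linarith)
      have hT1 : coarseTheta εm εp (r * Real.cos (θ₁ - φ)) = 1 := by
        rw [hx1]; exact ct_one _ _ _ (by linarith)
      have hv := hub _ ⟨r, φ, hr, rfl⟩
      have hnn := ct_nonneg εm εp (r * Real.cos (θ₂ - φ))
      rw [hT0, hT1] at hv ⊢
      linarith
  · exact fun s hs => hub s hs
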